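/- The class of elementary split matroids is closed under duality: if M is an elementary split matroid, then its dual M* is an elementary split matroid. Moreover, if M of rank r on S is represented by hyperedges H_1,...,H_q with values r, r_1,...,r_q satisfying (H1) and (H2), then M* is represented by the complements S − H_i with values |S| − r and |S − H_i| − r + r_i. -/

import Mathlib

open Matroid Set

variable {α : Type*}

/-- The rank of a set `Z` in a matroid `M`: the maximum size of an independent subset of `Z`. -/
noncomputable def mrk (M : Matroid α) (Z : Set α) : ℕ :=
  sSup {n | ∃ I, M.Indep I ∧ I ⊆ Z ∧ I.ncard = n}

/-- Deletion of a set `D` from a matroid `M`. -/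
def mdelete (M : Matroid α) (D : Set α) : Matroid α := M ↾ (M.E \ D)

/-- Contraction of a set `C` in a matroid `M`, defined as `(M✶ \ C)✶`. -/
def mcontract (M : Matroid α) (C : Set α) : Matroid α := (mdelete M✶ C)✶

/-- `N` is a minor of `M` if it is obtained by a contraction followed by a deletion. -/
def IsMinorOf (N M : Matroid α) : Prop := ∃ C D, N = mdelete (mcontract M C) D

/-- `M` is an elementary split matroid: its independent sets are the sets `X ⊆ S` with
`|X| ≤ r` and `|X ∩ H i| ≤ r i` for hyperedges `H i ⊆ S` satisfying (H1). -/
def IsElemSplit (M : Matroid α) : Prop :=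
  ∃ (q : ℕ) (H : Fin q → Set α) (r : ℕ) (rr : Fin q → ℕ),
    M.E.Finite ∧ r ≤ M.E.ncard ∧ (∀ i, H i ⊆ M.E) ∧
    (∀ i j : Fin q, i ≠ j → (H i ∩ H j).ncard + r ≤ rr i + rr j) ∧
    ∀ X, X ⊆ M.E → (M.Indep X ↔ X.ncard ≤ r ∧ ∀ i, (X ∩ H i).ncard ≤ rr i)

/-- `M` is (isomorphic to) the uniform matroid `U_{k,n}`. -/
def IsUnif (M : Matroid α) (k n : ℕ) : Prop :=
  M.E.Finite ∧ M.E.ncard = n ∧ ∀ I, I ⊆ M.E → (M.Indep I ↔ I.ncard ≤ k)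

/-- `e` is a loop of `M`. -/
def IsLoopOf (M : Matroid α) (e : α) : Prop := e ∈ M.E ∧ ¬ M.Indep {e}

/-- `e` is a coloop of `M`, i.e. a loop of the dual. -/
def IsColoopOf (M : Matroid α) (e : α) : Prop := IsLoopOf M✶ e

/-- A set `Z` is cyclic in `M` if the restriction `M | Z` has no coloops. -/
def IsCyclicSet (M : Matroid α) (Z : Set α) : Prop :=
  Z ⊆ M.E ∧ ∀ e ∈ Z, ¬ IsColoopOf (M ↾ Z) e

/-- A proper cyclic flat: a cyclic flat of nonzero rank that is not the ground set. -/
def ProperCyclicFlat (M : Matroid α) (F : Set α) : Prop :=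
  M.IsFlat F ∧ IsCyclicSet M F ∧ mrk M F ≠ 0 ∧ F ≠ M.E

/-- `M` is connected: `r(X) + r(S − X) > r(S)` for every nonempty proper `X ⊆ S`. -/
def ConnectedM (M : Matroid α) : Prop :=
  ∀ X, X ⊆ M.E → X.Nonempty → X ≠ M.E → mrk M M.E < mrk M X + mrk M (M.E \ X)

/-- `M` is (isomorphic to) the matroid `U_{0,1} ⊕ U_{1,2} ⊕ U_{1,1}`. -/
def IsU01U12U11 (M : Matroid α) : Prop :=
  ∃ a b c d : α, ([a, b, c, d] : List α).Nodup ∧ M.E = {a, b, c, d} ∧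
    ∀ X, X ⊆ M.E → (M.Indep X ↔ a ∉ X ∧ ¬ ({b, c} : Set α) ⊆ X)

/-!
Call `X` feasible if `|X ∩ H i| ≤ r i` for all `i`. By (H1), a feasible set with fewer than `r`
elements is tight (`|X ∩ H i| = r i`) for at most one `i`, so inside a finite `Z` with `r ≤ |Z|`
and `r ≤ |Z - H i| + r i` for all `i` it can be grown by one element (taken from `Z - H i` if `i`
is tight). Hence the bases of `M` are the feasible `r`-sets, and `Y` is independent in `M*` iff
`S - Y` contains a feasible `r`-set, i.e. iff `r ≤ |S - Y|` and `r ≤ |(S - Y) - H i| + r i` for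
all `i`. Counting inside `S - H i`, these are the conditions defining the complementary
hyperedges, which satisfy (H1) again.
-/

lemma ncard_inter_add_ncard_inter_le {X A B : Set α} (hX : X.Finite) (hAB : (A ∩ B).Finite) :
    (X ∩ A).ncard + (X ∩ B).ncard ≤ (A ∩ B).ncard + X.ncard := by
  have hsplit := ncard_inter_add_ncard_union (X ∩ A) (X ∩ B) (hX.inter_of_left _)
    (hX.inter_of_left _)
  have hinter := ncard_le_ncard (inter_subset_inter (inter_subset_right (s := X))
    (inter_subset_right (s := X))) hAB
  have hunion := ncard_le_ncard (s := (X ∩ A) ∪ (X ∩ B))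
    (union_subset inter_subset_left inter_subset_left) hX
  omega

lemma ncard_insert_inter_le {X A : Set α} {k : ℕ} {e : α} (hXA : (X ∩ A).ncard ≤ k)
    (he : e ∈ A → (X ∩ A).ncard < k) : (insert e X ∩ A).ncard ≤ k := by
  by_cases heA : e ∈ A
  · rw [insert_inter_of_mem heA]
    have := ncard_insert_le e (X ∩ A)
    have := he heA
    omega
  · rwa [insert_inter_of_notMem heA]

section Feasible

variable {q r : ℕ} {H : Fin q → Set α} {rr : Fin q → ℕ}

lemma ncard_inter_lt_of_tight (h1 : ∀ i j : Fin q, i ≠ j → (H i ∩ H j).ncard + r ≤ rr i + rr j)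
    {X : Set α} {i j : Fin q} (hHi : (H i).Finite) (hX : X.Finite) (hXr : X.ncard < r)
    (hij : i ≠ j) (hi : rr i ≤ (X ∩ H i).ncard) : (X ∩ H j).ncard < rr j := by
  have := ncard_inter_add_ncard_inter_le hX (hHi.inter_of_left (H j))
  have := h1 i j hij
  omega

lemma exists_insert_feasible (h1 : ∀ i j : Fin q, i ≠ j → (H i ∩ H j).ncard + r ≤ rr i + rr j)
    (hHfin : ∀ i, (H i).Finite) {Z X : Set α} (hZ : Z.Finite) (hXZ : X ⊆ Z)
    (hZr : r ≤ Z.ncard) (hZH : ∀ i, r ≤ (Z \ H i).ncard + rr i)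
    (hXr : X.ncard < r) (hXc : ∀ i, (X ∩ H i).ncard ≤ rr i) :
    ∃ e ∈ Z, e ∉ X ∧ ∀ i, (insert e X ∩ H i).ncard ≤ rr i := by
  have hX := hZ.subset hXZ
  suffices ∃ e ∈ Z, e ∉ X ∧ ∀ i, e ∈ H i → (X ∩ H i).ncard < rr i by
    obtain ⟨e, heZ, heX, he⟩ := this
    exact ⟨e, heZ, heX, fun i => ncard_insert_inter_le (hXc i) (he i)⟩
  by_cases htight : ∃ i, rr i ≤ (X ∩ H i).ncard
  · obtain ⟨i₀, hi₀⟩ := htight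
    have hcard : (X \ H i₀).ncard < (Z \ H i₀).ncard := by
      have := ncard_inter_add_ncard_sdiff_eq_ncard X (H i₀) hX
      have := hZH i₀
      have := hXc i₀
      omega
    obtain ⟨e, ⟨heZ, heH⟩, heX⟩ := exists_mem_notMem_of_ncard_lt_ncard hcard hX.sdiff
    refine ⟨e, heZ, fun h => heX ⟨h, heH⟩, fun i hei => ?_⟩
    exact ncard_inter_lt_of_tight h1 (hHfin i₀) hX hXr (by rintro rfl; exact heH hei) hi₀
  · push Not at htight
    obtain ⟨e, heZ, heX⟩ := exists_mem_notMem_of_ncard_lt_ncard (hXr.trans_le hZr) hX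
    exact ⟨e, heZ, heX, fun i _ => htight i⟩

lemma exists_feasible_subset_ncard_eq
    (h1 : ∀ i j : Fin q, i ≠ j → (H i ∩ H j).ncard + r ≤ rr i + rr j)
    (hHfin : ∀ i, (H i).Finite) {Z : Set α} (hZ : Z.Finite)
    (hZr : r ≤ Z.ncard) (hZH : ∀ i, r ≤ (Z \ H i).ncard + rr i) :
    ∃ X ⊆ Z, X.ncard = r ∧ ∀ i, (X ∩ H i).ncard ≤ rr i := by
  suffices h : ∀ n ≤ r, ∃ X ⊆ Z, X.ncard = n ∧ ∀ i, (X ∩ H i).ncard ≤ rr i from h r le_rfl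
  intro n
  induction n with
  | zero => exact fun _ => ⟨∅, empty_subset _, ncard_empty _, fun i => by simp⟩
  | succ n ih =>
    intro hn
    obtain ⟨X, hXZ, hXn, hXc⟩ := ih (Nat.le_of_succ_le hn)
    obtain ⟨e, heZ, heX, hec⟩ := exists_insert_feasible h1 hHfin hZ hXZ hZr hZH (by omega) hXc
    exact ⟨insert e X, insert_subset heZ hXZ,
      by rw [ncard_insert_of_notMem heX (hZ.subset hXZ), hXn], hec⟩

lemma exists_feasible_subset_ncard_eq_iff
    (h1 : ∀ i j : Fin q, i ≠ j → (H i ∩ H j).ncard + r ≤ rr i + rr j)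
    (hHfin : ∀ i, (H i).Finite) {Z : Set α} (hZ : Z.Finite) :
    (∃ X ⊆ Z, X.ncard = r ∧ ∀ i, (X ∩ H i).ncard ≤ rr i) ↔
      r ≤ Z.ncard ∧ ∀ i, r ≤ (Z \ H i).ncard + rr i := by
  refine ⟨?_, fun ⟨hZr, hZH⟩ => exists_feasible_subset_ncard_eq h1 hHfin hZ hZr hZH⟩
  rintro ⟨X, hXZ, rfl, hXc⟩
  refine ⟨ncard_le_ncard hXZ hZ, fun i => ?_⟩
  have := ncard_inter_add_ncard_sdiff_eq_ncard X (H i) (hZ.subset hXZ)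
  have := ncard_le_ncard (sdiff_subset_sdiff_left hXZ (t := H i)) hZ.sdiff
  have := hXc i
  omega

end Feasible

section ElementarySplit

variable {M : Matroid α} {q r : ℕ} {H : Fin q → Set α} {rr : Fin q → ℕ}

lemma isBase_iff_of_indep_iff (hE : M.E.Finite) (hHfin : ∀ i, (H i).Finite)
    (hrE : r ≤ M.E.ncard) (h1 : ∀ i j : Fin q, i ≠ j → (H i ∩ H j).ncard + r ≤ rr i + rr j)
    (h2 : ∀ i, r ≤ (M.E \ H i).ncard + rr i)
    (hMI : ∀ X, X ⊆ M.E → (M.Indep X ↔ X.ncard ≤ r ∧ ∀ i, (X ∩ H i).ncard ≤ rr i))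
    {B : Set α} : M.IsBase B ↔ B ⊆ M.E ∧ B.ncard = r ∧ ∀ i, (B ∩ H i).ncard ≤ rr i := by
  constructor
  · intro hB
    have hBE := hB.subset_ground
    obtain ⟨hBr, hBc⟩ := (hMI B hBE).1 hB.indep
    refine ⟨hBE, hBr.antisymm (not_lt.1 fun hlt => ?_), hBc⟩
    obtain ⟨e, heE, heB, hec⟩ := exists_insert_feasible h1 hHfin hE hBE hrE h2 hlt hBc
    have hind : M.Indep (insert e B) := (hMI _ (insert_subset heE hBE)).2
      ⟨by rw [ncard_insert_of_notMem heB (hE.subset hBE)]; omega, hec⟩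
    exact heB (hB.eq_of_subset_indep hind (subset_insert e B) ▸ mem_insert e B)
  · rintro ⟨hBE, hBr, hBc⟩
    refine ((hMI B hBE).2 ⟨hBr.le, hBc⟩).isBase_of_maximal fun J hJ hBJ => ?_
    have hJr := ((hMI J hJ.subset_ground).1 hJ).1
    exact eq_of_subset_of_ncard_le hBJ (hBr ▸ hJr) (hE.subset hJ.subset_ground)

lemma dual_indep_iff_of_indep_iff (hE : M.E.Finite) (hHfin : ∀ i, (H i).Finite)
    (hrE : r ≤ M.E.ncard) (h1 : ∀ i j : Fin q, i ≠ j → (H i ∩ H j).ncard + r ≤ rr i + rr j)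
    (h2 : ∀ i, r ≤ (M.E \ H i).ncard + rr i)
    (hMI : ∀ X, X ⊆ M.E → (M.Indep X ↔ X.ncard ≤ r ∧ ∀ i, (X ∩ H i).ncard ≤ rr i))
    {Y : Set α} (hY : Y ⊆ M.E) :
    M✶.Indep Y ↔ r ≤ (M.E \ Y).ncard ∧ ∀ i, r ≤ ((M.E \ Y) \ H i).ncard + rr i := by
  rw [dual_indep_iff_exists', ← exists_feasible_subset_ncard_eq_iff h1 hHfin hE.sdiff]
  simp only [hY, true_and, isBase_iff_of_indep_iff hE hHfin hrE h1 h2 hMI, subset_sdiff]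
  exact ⟨fun ⟨B, ⟨hBE, hBr, hBc⟩, hYB⟩ => ⟨B, ⟨hBE, hYB.symm⟩, hBr, hBc⟩,
    fun ⟨X, ⟨hXE, hXY⟩, hXr, hXc⟩ => ⟨X, ⟨hXE, hXr, hXc⟩, hXY.symm⟩⟩

end ElementarySplit

lemma le_ncard_sdiff_add_iff {A Y : Set α} {r k : ℕ} (hA : A.Finite) (h : r ≤ A.ncard + k) :
    r ≤ (A \ Y).ncard + k ↔ (Y ∩ A).ncard ≤ A.ncard + k - r := by
  have := ncard_inter_add_ncard_sdiff_eq_ncard A Y hA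
  rw [inter_comm]
  omega

lemma ncard_sdiff_union_add_le {S A B : Set α} {r a b : ℕ} (hS : S.Finite) (hA : A ⊆ S)
    (hB : B ⊆ S) (hrS : r ≤ S.ncard) (hAB : (A ∩ B).ncard + r ≤ a + b)
    (ha : r ≤ (S \ A).ncard + a) (hb : r ≤ (S \ B).ncard + b) :
    (S \ (A ∪ B)).ncard + (S.ncard - r) ≤ ((S \ A).ncard + a - r) + ((S \ B).ncard + b - r) := by
  have := ncard_sdiff_add_ncard_of_subset hA hS
  have := ncard_sdiff_add_ncard_of_subset hB hS
  have := ncard_sdiff_add_ncard_of_subset (union_subset hA hB) hS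
  have := ncard_union_add_ncard_inter A B (hS.subset hA) (hS.subset hB)
  omega

theorem stmt5 {α : Type*} (M : Matroid α) (hSfin : M.E.Finite) (q r : ℕ)
    (H : Fin q → Set α) (rr : Fin q → ℕ)
    (hH : ∀ i, H i ⊆ M.E) (hrS : r ≤ M.E.ncard)
    (h1 : ∀ i j : Fin q, i ≠ j → (H i ∩ H j).ncard + r ≤ rr i + rr j)
    (h2 : ∀ i, r ≤ (M.E \ H i).ncard + rr i)
    (hMI : ∀ X, X ⊆ M.E → (M.Indep X ↔ X.ncard ≤ r ∧ ∀ i, (X ∩ H i).ncard ≤ rr i)) :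
    IsElemSplit M✶ ∧
      ∀ X, X ⊆ M.E → (M✶.Indep X ↔ X.ncard ≤ M.E.ncard - r ∧
        ∀ i, (X ∩ (M.E \ H i)).ncard ≤ (M.E \ H i).ncard + rr i - r) := by
  have hHfin : ∀ i, (H i).Finite := fun i => hSfin.subset (hH i)
  have hdual : ∀ Y, Y ⊆ M.E → (M✶.Indep Y ↔ Y.ncard ≤ M.E.ncard - r ∧
      ∀ i, (Y ∩ (M.E \ H i)).ncard ≤ (M.E \ H i).ncard + rr i - r) := by
    intro Y hY
    have hcompl := ncard_sdiff_add_ncard_of_subset hY hSfin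
    rw [dual_indep_iff_of_indep_iff hSfin hHfin hrS h1 h2 hMI hY]
    refine Iff.and (by omega) (forall_congr' fun i => ?_)
    rw [sdiff_sdiff_comm, le_ncard_sdiff_add_iff hSfin.sdiff (h2 i)]
  refine ⟨⟨q, fun i => M.E \ H i, M.E.ncard - r, fun i => (M.E \ H i).ncard + rr i - r, hSfin,
    Nat.sub_le _ _, fun i => sdiff_subset, fun i j hij => ?_, hdual⟩, hdual⟩
  rw [sdiff_inter_sdiff]
  exact ncard_sdiff_union_add_le hSfin (hH i) (hH j) hrS (h1 i j hij) (h2 i) (h2 j)
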